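/- Iteration lemma for the Hölder estimate: Fix μ with 0 < μ < min(1 − d/(d+κ), 2 − d/(d/2+κ′)), and let ε₀ > 0 and θ ∈ (0,1/8) be the constants given by the improvement lemma. Then for all integers k ≥ 1, all ε < θ^{k−1}ε₀, all ψ ∈ C^{1,ω}_{M₀}, all A ∈ A^{0,ν₀}, all f ∈ L^{d/2+κ′}(D^ε(0,1)), all F ∈ L^{d+κ}(D^ε(0,1)), and all weak solutions u^ε of −∇·A(x/ε)∇u^ε = f + ∇·F in D^ε(0,1) with u^ε = 0 on Δ^ε(0,1): if the mean value of |u^ε|² over D^ε(0,1) is at most 1, ‖f‖_{L^{d/2+κ′}(D^ε(0,1))} ≤ ε₀ and ‖F‖_{L^{d+κ}(D^ε(0,1))} ≤ ε₀, then the mean value of |u^ε|² over D^ε(0,θ^k) is at most θ^{2kμ}. -/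

import Mathlib

/-!
Common definitions for elliptic systems with periodically oscillating coefficients
in "bumpy" half-spaces, following Kenig-Prange,
"Uniform Lipschitz Estimates in Bumpy Half-Spaces".
Throughout, the dimension is `d = n + 1` and points of `ℝ^d` are modelled as
`Fin (n+1) → ℝ` (with the sup norm); the first `n` coordinates are the horizontal
variable `x'` and the last one is the vertical variable `x_d`.
-/

noncomputable section

open MeasureTheory Metric Set

namespace Bumpy

/-- Points of `ℝ^d` with `d = n + 1`. -/
abbrev Pt (n : ℕ) := Fin (n + 1) → ℝ

variable {n N : ℕ}

/-- Horizontal part `x'` of a point. -/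
def hp (x : Pt n) : Fin n → ℝ := fun i => x i.castSucc

/-- Vertical coordinate `x_d` of a point. -/
def vc (x : Pt n) : ℝ := x (Fin.last n)

/-- The oscillating boundary graph function `x' ↦ ε ψ(x'/ε)`. -/
def bgraph (ε : ℝ) (ψ : (Fin n → ℝ) → ℝ) (x' : Fin n → ℝ) : ℝ := ε * ψ (ε⁻¹ • x')

/-- The bumpy slab `D^ε(0,r)`. -/
def bumpyD (n : ℕ) (ε : ℝ) (ψ : (Fin n → ℝ) → ℝ) (r : ℝ) : Set (Pt n) :=
  {x | ‖hp x‖ < r ∧ bgraph ε ψ (hp x) < vc x ∧ vc x < bgraph ε ψ (hp x) + r}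

/-- The bottom boundary portion `Δ^ε(0,r)`. -/
def bumpyB (n : ℕ) (ε : ℝ) (ψ : (Fin n → ℝ) → ℝ) (r : ℝ) : Set (Pt n) :=
  {x | ‖hp x‖ < r ∧ vc x = bgraph ε ψ (hp x)}

/-- The bumpy half-space `D^ε_+`. -/
def bumpyHalf (n : ℕ) (ε : ℝ) (ψ : (Fin n → ℝ) → ℝ) : Set (Pt n) :=
  {x | bgraph ε ψ (hp x) < vc x}

/-- The full bumpy boundary `Δ^ε`. -/
def bumpyBdry (n : ℕ) (ε : ℝ) (ψ : (Fin n → ℝ) → ℝ) : Set (Pt n) :=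
  {x | vc x = bgraph ε ψ (hp x)}

/-- Vertical distance to the bumpy boundary, `δ(x) = x_d − εψ(x'/ε)`. -/
def bdist (ε : ℝ) (ψ : (Fin n → ℝ) → ℝ) (x : Pt n) : ℝ := vc x - bgraph ε ψ (hp x)

/-- A modulus of continuity. -/
def IsModulus (ω : ℝ → ℝ) : Prop :=
  ω 0 = 0 ∧ (∀ t, 0 ≤ ω t) ∧ Filter.Tendsto ω (nhdsWithin 0 (Set.Ioi 0)) (nhds 0)

/-- The class `C^{1,ω}_{M₀}` of boundary functions. -/
def MemC1Mod (M₀ : ℝ) (ω : ℝ → ℝ) (ψ : (Fin n → ℝ) → ℝ) : Prop :=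
  ContDiff ℝ 1 ψ ∧ (∀ x', 0 ≤ ψ x' ∧ ψ x' ≤ M₀) ∧
    (∀ x', ‖fderiv ℝ ψ x'‖ ≤ M₀) ∧
    ∀ x' y', ‖fderiv ℝ ψ x' - fderiv ℝ ψ y'‖ ≤ ω ‖x' - y'‖

/-- The class `C^{1,ν₀}_{M₀}` of boundary functions:
`0 ≤ ψ ≤ M₀` and `‖∇ψ‖_∞ + [∇ψ]_{C^{0,ν₀}} ≤ M₀`. -/
def MemC1Hold (M₀ ν₀ : ℝ) (ψ : (Fin n → ℝ) → ℝ) : Prop :=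
  ContDiff ℝ 1 ψ ∧ (∀ x', 0 ≤ ψ x' ∧ ψ x' ≤ M₀) ∧
    ∃ K L : ℝ, 0 ≤ K ∧ 0 ≤ L ∧ K + L ≤ M₀ ∧
      (∀ x', ‖fderiv ℝ ψ x'‖ ≤ K) ∧
      ∀ x' y', ‖fderiv ℝ ψ x' - fderiv ℝ ψ y'‖ ≤ L * ‖x' - y'‖ ^ ν₀

/-- Coefficient tensors `A = (A^{αβ}_{ij}(y))`. -/
abbrev Coeff (n N : ℕ) := Pt n → Fin (n + 1) → Fin (n + 1) → Fin N → Fin N → ℝ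

/-- The quadratic form `A(y)ξ·ξ` on `ℝ^{dN}`. -/
def qform (A : Coeff n N) (y : Pt n) (ξ : Fin (n + 1) → Fin N → ℝ) : ℝ :=
  ∑ α, ∑ β, ∑ i, ∑ j, A y α β i j * ξ α i * ξ β j

/-- The class `𝒜^{0,ν₀}`: `C^{0,ν₀}` with norm bound `M₀`, uniformly elliptic with
constant `lam`, and `ℤ^d`-periodic. -/
def MemA (lam ν₀ M₀ : ℝ) (A : Coeff n N) : Prop :=
  (∃ K L : ℝ, 0 ≤ K ∧ 0 ≤ L ∧ K + L ≤ M₀ ∧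
      (∀ y α β i j, |A y α β i j| ≤ K) ∧
      ∀ y z α β i j, |A y α β i j - A z α β i j| ≤ L * ‖y - z‖ ^ ν₀) ∧
  (∀ y ξ, lam * (∑ α, ∑ i, ξ α i ^ 2) ≤ qform A y ξ ∧
      qform A y ξ ≤ lam⁻¹ * ∑ α, ∑ i, ξ α i ^ 2) ∧
  ∀ (y : Pt n) (z : Fin (n + 1) → ℤ), A (y + fun α => (z α : ℝ)) = A y

/-- Coefficients oscillating at scale `ε`: `x ↦ A(x/ε)`. -/
def osc (ε : ℝ) (A : Coeff n N) : Coeff n N := fun x => A (ε⁻¹ • x)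

/-- The identity (Laplacian) coefficients. -/
def idCoeff (n N : ℕ) : Coeff n N := fun _ α β i j => if α = β ∧ i = j then 1 else 0

/-- Partial derivative `∂_α g(x)` of a scalar function. -/
def pd (g : Pt n → ℝ) (x : Pt n) (α : Fin (n + 1)) : ℝ := fderiv ℝ g x (Pi.single α 1)

/-- Smooth (vector-valued) test functions compactly supported in `Ω`. -/
def IsTest (Ω : Set (Pt n)) (φ : Pt n → Fin N → ℝ) : Prop :=
  ContDiff ℝ (⊤ : ℕ∞) φ ∧ HasCompactSupport φ ∧ tsupport φ ⊆ Ω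

/-- Smooth scalar test functions compactly supported in `Ω`. -/
def IsTestS (Ω : Set (Pt n)) (φ : Pt n → ℝ) : Prop :=
  ContDiff ℝ (⊤ : ℕ∞) φ ∧ HasCompactSupport φ ∧ tsupport φ ⊆ Ω

/-- The energy density `A∇u·∇φ = A^{αβ}_{ij} ∂_β u_j ∂_α φ_i`. -/
def ed (A : Coeff n N) (u φ : Pt n → Fin N → ℝ) (x : Pt n) : ℝ :=
  ∑ α, ∑ β, ∑ i, ∑ j, A x α β i j * pd (fun y => u y j) x β * pd (fun y => φ y i) x α

/-- `u` is a weak solution of `−∇·A∇u = f + ∇·F` in `Ω`. -/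
def WeakSol (A : Coeff n N) (Ω : Set (Pt n)) (f : Pt n → Fin N → ℝ)
    (F : Pt n → Fin (n + 1) → Fin N → ℝ) (u : Pt n → Fin N → ℝ) : Prop :=
  (∀ x ∈ Ω, DifferentiableAt ℝ u x) ∧
  ∀ φ : Pt n → Fin N → ℝ, IsTest Ω φ →
    ∫ x in Ω, ed A u φ x =
      (∫ x in Ω, ∑ i, f x i * φ x i) -
        ∫ x in Ω, ∑ α, ∑ i, F x α i * pd (fun y => φ y i) x α

/-- Zero Dirichlet condition on the boundary portion `Γ`, in the sense of continuity
up to the boundary. -/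
def ZeroBC (Ω Γ : Set (Pt n)) (u : Pt n → Fin N → ℝ) : Prop :=
  ContinuousOn u (Ω ∪ Γ) ∧ ∀ x ∈ Γ, u x = 0

/-- Matrix-valued weak solution of `−∇·A∇v = ∇·(A∇g)` in `Ω` (column-wise),
vanishing on `∂Ω`. -/
def CorrectorSol (A : Coeff n N) (Ω : Set (Pt n))
    (g v : Pt n → Fin N → Fin N → ℝ) : Prop :=
  (∀ x ∈ Ω, DifferentiableAt ℝ v x) ∧ ContinuousOn v (closure Ω) ∧
    (∀ x ∈ frontier Ω, v x = 0) ∧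
    ∀ φ : Pt n → Fin N → ℝ, IsTest Ω φ → ∀ m : Fin N,
      ∫ x in Ω, ∑ α, ∑ β, ∑ i, ∑ k,
          A x α β i k * pd (fun y => v y k m) x β * pd (fun y => φ y i) x α =
        - ∫ x in Ω, ∑ α, ∑ β, ∑ i, ∑ k,
            A x α β i k * pd (fun y => g y k m) x β * pd (fun y => φ y i) x α

/-- Scalar weak solution of `−Δv = Δg` in `Ω`, vanishing on `∂Ω`. -/
def ScalarCorrectorSol (Ω : Set (Pt n)) (g v : Pt n → ℝ) : Prop :=
  (∀ x ∈ Ω, DifferentiableAt ℝ v x) ∧ ContinuousOn v (closure Ω) ∧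
    (∀ x ∈ frontier Ω, v x = 0) ∧
    ∀ φ : Pt n → ℝ, IsTestS Ω φ →
      ∫ x in Ω, ∑ α, pd v x α * pd φ x α = - ∫ x in Ω, ∑ α, pd g x α * pd φ x α

/-- Scalar weak solution of `−Δu = 0` in `Ω`. -/
def HarmScalar (Ω : Set (Pt n)) (u : Pt n → ℝ) : Prop :=
  (∀ x ∈ Ω, DifferentiableAt ℝ u x) ∧
    ∀ φ : Pt n → ℝ, IsTestS Ω φ → ∫ x in Ω, ∑ α, pd u x α * pd φ x α = 0

/-- Zero Dirichlet condition, scalar version. -/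
def ZeroBCScalar (Ω Γ : Set (Pt n)) (u : Pt n → ℝ) : Prop :=
  ContinuousOn u (Ω ∪ Γ) ∧ ∀ x ∈ Γ, u x = 0

/-- `G` is a Green kernel for `−∇·A∇` on `Ω` with Dirichlet boundary conditions:
for each pole `x̃ ∈ Ω` and each column `m`, `G(·,x̃)eₘ` vanishes on `∂Ω` and
satisfies `∫_Ω A∇G(·,x̃)eₘ·∇φ = φ(x̃)ₘ` for every test function `φ`. -/
def IsGreen (A : Coeff n N) (Ω : Set (Pt n))
    (G : Pt n → Pt n → Fin N → Fin N → ℝ) : Prop :=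
  ∀ xt ∈ Ω,
    ContinuousOn (fun x => G x xt) (closure Ω \ {xt}) ∧
    (∀ x ∈ frontier Ω, G x xt = 0) ∧
    (∀ x ∈ Ω \ {xt}, DifferentiableAt ℝ (fun y => G y xt) x) ∧
    ∀ φ : Pt n → Fin N → ℝ, IsTest Ω φ → ∀ m : Fin N,
      ∫ x in Ω, ∑ α, ∑ β, ∑ i, ∑ k,
          A x α β i k * pd (fun y => G y xt k m) x β * pd (fun y => φ y i) x α = φ xt m

/-- The unit periodicity cell `[0,1)^d`. -/
def cell (n : ℕ) : Set (Pt n) := Set.pi Set.univ fun _ : Fin (n + 1) => Set.Ico (0 : ℝ) 1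

/-- `χ` is the mean-zero periodic cell corrector in direction `γ`, i.e. a weak
solution of `−∇·A∇χ^γ = ∂_α A^{αγ}` on the torus. -/
def IsCellCorrector (A : Coeff n N) (γ : Fin (n + 1))
    (χ : Pt n → Fin N → Fin N → ℝ) : Prop :=
  (∀ y, DifferentiableAt ℝ χ y) ∧
  (∀ (y : Pt n) (z : Fin (n + 1) → ℤ), χ (y + fun α => (z α : ℝ)) = χ y) ∧
  (∫ y in cell n, χ y) = 0 ∧
  ∀ φ : Pt n → Fin N → ℝ, ContDiff ℝ (⊤ : ℕ∞) φ → HasCompactSupport φ → ∀ m : Fin N,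
    ∫ y, ∑ α, ∑ β, ∑ i, ∑ k,
        A y α β i k * pd (fun z => χ z k m) y β * pd (fun z => φ z i) y α =
      - ∫ y, ∑ α, ∑ i, A y α γ i m * pd (fun z => φ z i) y α

/-- The homogenized coefficient matrix `Ā` (as constant coefficients). -/
def homog (A : Coeff n N) (χ : Fin (n + 1) → Pt n → Fin N → Fin N → ℝ) : Coeff n N :=
  fun _ α β i j =>
    (∫ y in cell n, A y α β i j) +
      ∑ γ, ∫ y in cell n, ∑ k, A y α γ i k * pd (fun z => χ β z k j) y γ

/-- Horizontal cutoff `ϑ'`: supported in `(-3/2,3/2)^{d-1}`, `≡ 1` on `(-1,1)^{d-1}`. -/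
def IsHCut (θ' : (Fin n → ℝ) → ℝ) : Prop :=
  ContDiff ℝ (⊤ : ℕ∞) θ' ∧ HasCompactSupport θ' ∧
    tsupport θ' ⊆ {x' | ‖x'‖ < 3 / 2} ∧ ∀ x', ‖x'‖ < 1 → θ' x' = 1

/-- Vertical cutoff `ϑ_d`: supported in `(-3M₀/2,3M₀/2)`, `≡ 1` on `(-M₀,M₀)`. -/
def IsVCut (M₀ : ℝ) (θd : ℝ → ℝ) : Prop :=
  ContDiff ℝ (⊤ : ℕ∞) θd ∧ HasCompactSupport θd ∧
    tsupport θd ⊆ {t | |t| < 3 * M₀ / 2} ∧ ∀ t, |t| < M₀ → θd t = 1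

/-- The cutoff `Θ(x', y_d) = ϑ'(x')ϑ_d(y_d)`. -/
def cutoff (θ' : (Fin n → ℝ) → ℝ) (θd : ℝ → ℝ) (x' : Fin n → ℝ) (yd : ℝ) : ℝ :=
  θ' x' * θd yd

/-- The flat half-space `ℝ^d_+`. -/
def flatHalf (n : ℕ) : Set (Pt n) := {x | 0 < vc x}

/-- The flat boundary `{x_d = 0}`. -/
def flatBdry (n : ℕ) : Set (Pt n) := {x | vc x = 0}

/-- The outward unit normal at a boundary point of a bumpy half-space. -/
def normalVec (ε : ℝ) (ψ : (Fin n → ℝ) → ℝ) (xt : Pt n) : Fin (n + 1) → ℝ :=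
  fun β =>
    (Fin.snoc (fun i : Fin n => fderiv ℝ ψ (ε⁻¹ • hp xt) (Pi.single i 1)) (-1 : ℝ) :
        Fin (n + 1) → ℝ) β /
      Real.sqrt (1 + ∑ i, fderiv ℝ ψ (ε⁻¹ • hp xt) (Pi.single i 1) ^ 2)

/-- The Poisson kernel `P^ε_{ij}(x,x̃) = −A^{αβ}_{kj}(x̃/ε) ∂_{x̃_α} G^ε_{ik}(x,x̃) n_β`
built from a Green kernel `G`. -/
def poissonK (ε : ℝ) (A : Coeff n N) (ψ : (Fin n → ℝ) → ℝ)
    (G : Pt n → Pt n → Fin N → Fin N → ℝ) (x xt : Pt n) : Fin N → Fin N → ℝ :=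
  fun i j =>
    -∑ α, ∑ β, ∑ k, A (ε⁻¹ • xt) α β k j *
        fderiv ℝ (fun y => G x y i k) xt (Pi.single α 1) * normalVec ε ψ xt β

end Bumpy

/-!
The improvement lemma is invariant under the rescaling `v(y) = b^{-μ} u(b y)`: if `u` solves the
problem in `D^ε(0,1)`, then `v` solves it in `D^{ε/b}(0,1)` with data `b^{2-μ} f(b·)` and
`b^{1-μ} F(b·)`. Since `μ` lies below the scaling-critical exponents `2 - d/(d/2+κ')` and
`1 - d/(d+κ)`, these data are no larger in `L^{d/2+κ'}` and `L^{d+κ}` than `f` and `F`. At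
`b = θ^k` the bound already obtained on `D^ε(0,θ^k)` normalizes `v`, and one more application of
the improvement lemma to `v` gives the bound on `D^ε(0,θ^{k+1})`.
-/

open MeasureTheory Module

section Rescaling

variable {E V : Type*} [NormedAddCommGroup E] [NormedSpace ℝ E] [MeasurableSpace E]
  [BorelSpace E] [FiniteDimensional ℝ E] (μ : Measure E) [μ.IsAddHaarMeasure]
  [NormedAddCommGroup V] [NormedSpace ℝ V]

theorem MeasurableEmbedding.average_map {α β : Type*} [MeasurableSpace α] [MeasurableSpace β]
    {f : α → β} (hf : MeasurableEmbedding f) (ν : Measure α) (g : β → V) :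
    ⨍ y, g y ∂(ν.map f) = ⨍ x, g (f x) ∂ν := by
  rw [average_eq, average_eq, hf.integral_map, measureReal_def, measureReal_def,
    Measure.map_apply hf.measurable MeasurableSet.univ, Set.preimage_univ]

theorem MeasureTheory.average_smul_measure {α : Type*} [MeasurableSpace α] (ν : Measure α)
    {c : ENNReal} (hc0 : c ≠ 0) (hc : c ≠ ⊤) (g : α → V) :
    ⨍ x, g x ∂(c • ν) = ⨍ x, g x ∂ν := by
  have hc' : c.toReal ≠ 0 := ENNReal.toReal_ne_zero.2 ⟨hc0, hc⟩
  rw [average_eq, average_eq, integral_smul_measure, measureReal_ennreal_smul_apply, smul_smul,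
    mul_inv, mul_right_comm, inv_mul_cancel₀ hc', one_mul]

theorem MeasureTheory.Measure.map_smul_restrict_preimage {c : ℝ} (hc : c ≠ 0) (s : Set E) :
    (μ.restrict ((c • ·) ⁻¹' s)).map (c • ·) =
      ENNReal.ofReal |(c ^ finrank ℝ E)⁻¹| • μ.restrict s := by
  rw [← (measurableEmbedding_const_smul₀ hc).restrict_map, Measure.map_addHaar_smul μ hc,
    Measure.restrict_smul]

theorem MeasureTheory.setAverage_comp_smul {c : ℝ} (hc : c ≠ 0) (s : Set E) (g : E → V) :
    ⨍ y in (c • ·) ⁻¹' s, g (c • y) ∂μ = ⨍ x in s, g x ∂μ := by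
  rw [← (measurableEmbedding_const_smul₀ hc).average_map, μ.map_smul_restrict_preimage hc,
    average_smul_measure _ _ ENNReal.ofReal_ne_top]
  exact (ENNReal.ofReal_pos.2 (abs_pos.2 (inv_ne_zero (pow_ne_zero _ hc)))).ne'

theorem MeasureTheory.eLpNorm_comp_smul {W : Type*} [NormedAddCommGroup W] {c : ℝ} (hc : c ≠ 0)
    (s : Set E) (g : E → W) {p : ENNReal} (hp : p ≠ ⊤) :
    eLpNorm (fun y => g (c • y)) p (μ.restrict ((c • ·) ⁻¹' s)) =
      ENNReal.ofReal |(c ^ finrank ℝ E)⁻¹| ^ (1 / p).toReal * eLpNorm g p (μ.restrict s) := by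
  rw [← Function.comp_def, ← (measurableEmbedding_const_smul₀ hc).eLpNorm_map_measure,
    μ.map_smul_restrict_preimage hc, eLpNorm_smul_measure_of_ne_top hp, smul_eq_mul]

theorem MeasureTheory.eLpNorm_smul_comp_smul_le {a c q : ℝ} (hc : 0 < c) (hq : 0 < q)
    (ha : |a| ≤ c ^ (finrank ℝ E / q)) (s : Set E) (g : E → V) :
    eLpNorm (fun y => a • g (c • y)) (ENNReal.ofReal q) (μ.restrict ((c • ·) ⁻¹' s)) ≤
      eLpNorm g (ENNReal.ofReal q) (μ.restrict s) := by
  have hscale : |a| * |(c ^ finrank ℝ E)⁻¹| ^ q⁻¹ ≤ 1 := by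
    rw [abs_of_pos (a := (c ^ finrank ℝ E)⁻¹) (by positivity), ← Real.rpow_natCast,
      Real.inv_rpow (by positivity), ← Real.rpow_mul hc.le, ← div_eq_mul_inv, ← div_eq_mul_inv]
    exact div_le_one_of_le₀ ha (by positivity)
  rw [show (fun y => a • g (c • y)) = a • fun y => g (c • y) from rfl, eLpNorm_const_smul,
    eLpNorm_comp_smul μ hc.ne' s g ENNReal.ofReal_ne_top, ← mul_assoc]
  refine mul_le_of_le_one_left bot_le ?_
  rw [one_div, ENNReal.toReal_inv, ENNReal.toReal_ofReal hq.le, Real.enorm_eq_ofReal_abs,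
    ENNReal.ofReal_rpow_of_nonneg (abs_nonneg _) (by positivity),
    ← ENNReal.ofReal_mul (abs_nonneg _)]
  exact ENNReal.ofReal_le_one.2 hscale

theorem MeasureTheory.setAverage_norm_smul_comp_smul_sq {a c : ℝ} (hc : c ≠ 0) (s : Set E)
    (u : E → V) :
    ⨍ y in (c • ·) ⁻¹' s, ‖a • u (c • y)‖ ^ 2 ∂μ = a ^ 2 * ⨍ x in s, ‖u x‖ ^ 2 ∂μ := by
  simp only [norm_smul, mul_pow, Real.norm_eq_abs, sq_abs]
  rw [average_eq, integral_const_mul, smul_eq_mul, mul_left_comm, ← smul_eq_mul (a := _⁻¹),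
    ← average_eq, setAverage_comp_smul μ hc s fun x => ‖u x‖ ^ 2]

end Rescaling

namespace Bumpy

variable {n N : ℕ}

theorem finrank_pt : finrank ℝ (Pt n) = n + 1 := Module.finrank_fin_fun ℝ

theorem bgraph_smul {c : ℝ} (hc : c ≠ 0) (ε : ℝ) (ψ : (Fin n → ℝ) → ℝ) (x' : Fin n → ℝ) :
    bgraph ε ψ (c • x') = c * bgraph (c⁻¹ * ε) ψ x' := by
  simp only [bgraph, smul_smul, mul_inv_rev, inv_inv, ← mul_assoc, mul_inv_cancel₀ hc, one_mul]

theorem hp_smul (c : ℝ) (x : Pt n) : hp (c • x) = c • hp x := rfl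

theorem vc_smul (c : ℝ) (x : Pt n) : vc (c • x) = c * vc x := rfl

theorem preimage_smul_bumpyD {c : ℝ} (hc : 0 < c) (ε : ℝ) (ψ : (Fin n → ℝ) → ℝ) (r : ℝ) :
    (c • ·) ⁻¹' bumpyD n ε ψ r = bumpyD n (c⁻¹ * ε) ψ (c⁻¹ * r) := by
  ext x
  simp only [mem_preimage, bumpyD, mem_ofPred_eq, hp_smul, vc_smul, bgraph_smul hc.ne', norm_smul,
    Real.norm_eq_abs, abs_of_pos hc, mul_lt_mul_iff_right₀ hc, ← sub_lt_iff_lt_add',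
    lt_inv_mul_iff₀ hc, mul_sub]

theorem preimage_smul_bumpyB {c : ℝ} (hc : 0 < c) (ε : ℝ) (ψ : (Fin n → ℝ) → ℝ) (r : ℝ) :
    (c • ·) ⁻¹' bumpyB n ε ψ r = bumpyB n (c⁻¹ * ε) ψ (c⁻¹ * r) := by
  ext x
  simp only [mem_preimage, bumpyB, mem_ofPred_eq, hp_smul, vc_smul, bgraph_smul hc.ne', norm_smul,
    Real.norm_eq_abs, abs_of_pos hc, lt_inv_mul_iff₀ hc, mul_right_inj' hc.ne']

theorem bumpyD_mono (ε : ℝ) (ψ : (Fin n → ℝ) → ℝ) {r r' : ℝ} (h : r ≤ r') :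
    bumpyD n ε ψ r ⊆ bumpyD n ε ψ r' :=
  fun _ ⟨h₁, h₂, h₃⟩ => ⟨h₁.trans_le h, h₂, by linarith⟩

theorem bumpyB_mono (ε : ℝ) (ψ : (Fin n → ℝ) → ℝ) {r r' : ℝ} (h : r ≤ r') :
    bumpyB n ε ψ r ⊆ bumpyB n ε ψ r' :=
  fun _ ⟨h₁, h₂⟩ => ⟨h₁.trans_le h, h₂⟩

theorem osc_comp_smul (ε c : ℝ) (A : Coeff n N) :
    (fun y => osc ε A (c • y)) = osc (c⁻¹ * ε) A := by
  funext y
  simp only [osc, smul_smul, mul_inv_rev, inv_inv]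

theorem pd_const_mul (a : ℝ) (g : Pt n → ℝ) (x : Pt n) (α : Fin (n + 1)) :
    pd (fun y => a * g y) x α = a * pd g x α := by
  change fderiv ℝ (a • g) x _ = _
  rw [fderiv_const_smul_field]
  rfl

theorem pd_comp_smul {ι : Type*} (u : Pt n → ι → ℝ) (c : ℝ) (x : Pt n) (j : ι)
    (α : Fin (n + 1)) :
    pd (fun y => u (c • y) j) x α = c * pd (fun y => u y j) (c • x) α :=
  congrArg (fun L => L (Pi.single α 1)) (fderiv_comp_smul (f := fun y => u y j) (x := x) c)

theorem pd_eq_zero_of_notMem_tsupport {φ : Pt n → Fin N → ℝ} {x : Pt n} (hx : x ∉ tsupport φ)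
    (i : Fin N) (α : Fin (n + 1)) : pd (fun y => φ y i) x α = 0 := by
  have hxi : x ∉ tsupport fun y => φ y i :=
    fun h => hx (tsupport_comp_subset (g := fun v : Fin N → ℝ => v i) rfl φ h)
  rw [pd, fderiv_of_notMem_tsupport ℝ hxi]
  rfl

theorem IsTest.comp_inv_smul {Ω : Set (Pt n)} {φ : Pt n → Fin N → ℝ} {c : ℝ} (hc : c ≠ 0)
    (hφ : IsTest ((c • ·) ⁻¹' Ω) φ) : IsTest Ω fun x => φ (c⁻¹ • x) := by
  obtain ⟨hsmooth, hcompact, hsupp⟩ := hφ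
  let e : Pt n ≃ₜ Pt n := Homeomorph.smulOfNeZero c⁻¹ (inv_ne_zero hc)
  refine ⟨hsmooth.comp (contDiff_const_smul c⁻¹), hcompact.comp_homeomorph e, ?_⟩
  rw [show (fun x => φ (c⁻¹ • x)) = φ ∘ e from rfl, tsupport_comp_eq_preimage]
  intro x hx
  simpa [e, smul_smul, mul_inv_cancel₀ hc] using hsupp hx

theorem IsTest.setIntegral_eq_integral {Ω : Set (Pt n)} {φ : Pt n → Fin N → ℝ}
    (hφ : IsTest Ω φ) {g : Pt n → ℝ} (hg : ∀ x ∉ tsupport φ, g x = 0) :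
    ∫ x in Ω, g x = ∫ x, g x :=
  setIntegral_eq_integral_of_forall_compl_eq_zero fun x hx => hg x fun h => hx (hφ.2.2 h)

variable {A : Coeff n N} {Ω Ω' Γ Γ' : Set (Pt n)} {f : Pt n → Fin N → ℝ}
  {F : Pt n → Fin (n + 1) → Fin N → ℝ} {u : Pt n → Fin N → ℝ}

theorem weakSol_iff_integral : WeakSol A Ω f F u ↔ (∀ x ∈ Ω, DifferentiableAt ℝ u x) ∧
    ∀ φ, IsTest Ω φ → ∫ x, ed A u φ x =
      (∫ x, ∑ i, f x i * φ x i) - ∫ x, ∑ α, ∑ i, F x α i * pd (fun y => φ y i) x α := by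
  refine and_congr_right fun _ => forall_congr' fun φ => forall_congr' fun hφ => ?_
  rw [hφ.setIntegral_eq_integral, hφ.setIntegral_eq_integral, hφ.setIntegral_eq_integral]
  all_goals
    intro x hx
    simp [ed, pd_eq_zero_of_notMem_tsupport hx, image_eq_zero_of_notMem_tsupport hx]

theorem WeakSol.mono (h : WeakSol A Ω f F u) (hΩ : Ω' ⊆ Ω) : WeakSol A Ω' f F u := by
  rw [weakSol_iff_integral] at h ⊢
  exact ⟨fun x hx => h.1 x (hΩ hx), fun φ hφ => h.2 φ ⟨hφ.1, hφ.2.1, hφ.2.2.trans hΩ⟩⟩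

theorem WeakSol.comp_smul (h : WeakSol A Ω f F u) {c : ℝ} (hc : c ≠ 0) (a : ℝ) :
    WeakSol (fun y => A (c • y)) ((c • ·) ⁻¹' Ω) (fun y => (a * c ^ 2) • f (c • y))
      (fun y => (a * c) • F (c • y)) (fun y => a • u (c • y)) := by
  rw [weakSol_iff_integral] at h ⊢
  refine ⟨fun x hx =>
    ((h.1 _ hx).comp x (differentiable_id.const_smul c).differentiableAt).const_smul a,
    fun φ hφ => ?_⟩
  set φ' : Pt n → Fin N → ℝ := fun x => φ (c⁻¹ • x)
  have hφ' : ∀ y, φ' (c • y) = φ y := fun y => by simp [φ', smul_smul, inv_mul_cancel₀ hc]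
  have hpd : ∀ y i α, pd (fun z => φ z i) y α = c * pd (fun z => φ' z i) (c • y) α := by
    intro y i α
    simpa only [hφ'] using pd_comp_smul φ' c y i α
  have hI : ∀ g : Pt n → ℝ, ∫ y, g (c • y) = |(c ^ (n + 1))⁻¹| * ∫ x, g x := fun g => by
    simpa only [finrank_pt, smul_eq_mul] using Measure.integral_comp_smul volume g c
  have hed : ∀ y, ed (fun y => A (c • y)) (fun y => a • u (c • y)) φ y =
      (a * c ^ 2) * ed A u φ' (c • y) := by
    intro y
    simp only [ed, Pi.smul_apply, smul_eq_mul, pd_const_mul, pd_comp_smul, hpd, Finset.mul_sum]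
    refine Finset.sum_congr rfl fun α _ => Finset.sum_congr rfl fun β _ =>
      Finset.sum_congr rfl fun i _ => Finset.sum_congr rfl fun j _ => ?_
    ring
  have hf : ∀ y, ∑ i, ((a * c ^ 2) • f (c • y)) i * φ y i =
      (a * c ^ 2) * ∑ i, f (c • y) i * φ' (c • y) i := by
    intro y
    simp only [Pi.smul_apply, smul_eq_mul, hφ', Finset.mul_sum, mul_assoc]
  have hF : ∀ y, ∑ α, ∑ i, ((a * c) • F (c • y)) α i * pd (fun z => φ z i) y α =
      (a * c ^ 2) * ∑ α, ∑ i, F (c • y) α i * pd (fun z => φ' z i) (c • y) α := by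
    intro y
    simp only [Pi.smul_apply, smul_eq_mul, hpd, Finset.mul_sum]
    refine Finset.sum_congr rfl fun α _ => Finset.sum_congr rfl fun i _ => ?_
    ring
  simp_rw [hed, hf, hF, integral_const_mul]
  rw [hI (ed A u φ'), hI (fun x => ∑ i, f x i * φ' x i),
    hI (fun x => ∑ α, ∑ i, F x α i * pd (fun z => φ' z i) x α), h.2 φ' (hφ.comp_inv_smul hc)]
  ring

theorem ZeroBC.mono (h : ZeroBC Ω Γ u) (hΩ : Ω' ⊆ Ω) (hΓ : Γ' ⊆ Γ) : ZeroBC Ω' Γ' u :=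
  ⟨h.1.mono (union_subset_union hΩ hΓ), fun x hx => h.2 x (hΓ hx)⟩

theorem ZeroBC.comp_smul (h : ZeroBC Ω Γ u) (c a : ℝ) :
    ZeroBC ((c • ·) ⁻¹' Ω) ((c • ·) ⁻¹' Γ) fun y => a • u (c • y) :=
  ⟨(h.1.comp (continuous_const_smul c).continuousOn fun _ hx => hx).const_smul a,
    fun x hx => by simp [h.2 _ hx]⟩

theorem setAverage_bumpyD_le_of_improvement {ψ : (Fin n → ℝ) → ℝ} {ε ε₀ b θ μ p q : ℝ}
    (hb0 : 0 < b) (hb1 : b ≤ 1) (hθ : 0 ≤ θ) (hp : 0 < p) (hq : 0 < q)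
    (hμp : (n + 1 : ℝ) / p ≤ 2 - μ) (hμq : (n + 1 : ℝ) / q ≤ 1 - μ)
    (himp : ∀ (f' : Pt n → Fin N → ℝ) (F' : Pt n → Fin (n + 1) → Fin N → ℝ)
      (v : Pt n → Fin N → ℝ),
      WeakSol (osc (b⁻¹ * ε) A) (bumpyD n (b⁻¹ * ε) ψ 1) f' F' v →
      ZeroBC (bumpyD n (b⁻¹ * ε) ψ 1) (bumpyB n (b⁻¹ * ε) ψ 1) v →
      (⨍ x in bumpyD n (b⁻¹ * ε) ψ 1, ‖v x‖ ^ 2) ≤ 1 →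
      eLpNorm f' (ENNReal.ofReal p) (volume.restrict (bumpyD n (b⁻¹ * ε) ψ 1)) ≤
        ENNReal.ofReal ε₀ →
      eLpNorm F' (ENNReal.ofReal q) (volume.restrict (bumpyD n (b⁻¹ * ε) ψ 1)) ≤
        ENNReal.ofReal ε₀ →
      (⨍ x in bumpyD n (b⁻¹ * ε) ψ θ, ‖v x‖ ^ 2) ≤ θ ^ (2 * μ))
    (hsol : WeakSol (osc ε A) (bumpyD n ε ψ 1) f F u)
    (hbc : ZeroBC (bumpyD n ε ψ 1) (bumpyB n ε ψ 1) u)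
    (havg : (⨍ x in bumpyD n ε ψ b, ‖u x‖ ^ 2) ≤ b ^ (2 * μ))
    (hf : eLpNorm f (ENNReal.ofReal p) (volume.restrict (bumpyD n ε ψ 1)) ≤ ENNReal.ofReal ε₀)
    (hF : eLpNorm F (ENNReal.ofReal q) (volume.restrict (bumpyD n ε ψ 1)) ≤ ENNReal.ofReal ε₀) :
    (⨍ x in bumpyD n ε ψ (b * θ), ‖u x‖ ^ 2) ≤ (b * θ) ^ (2 * μ) := by
  have hD : (b • ·) ⁻¹' bumpyD n ε ψ b = bumpyD n (b⁻¹ * ε) ψ 1 := by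
    rw [preimage_smul_bumpyD hb0, inv_mul_cancel₀ hb0.ne']
  have hB : (b • ·) ⁻¹' bumpyB n ε ψ b = bumpyB n (b⁻¹ * ε) ψ 1 := by
    rw [preimage_smul_bumpyB hb0, inv_mul_cancel₀ hb0.ne']
  have hDθ : (b • ·) ⁻¹' bumpyD n ε ψ (b * θ) = bumpyD n (b⁻¹ * ε) ψ θ := by
    rw [preimage_smul_bumpyD hb0, inv_mul_cancel_left₀ hb0.ne']
  have hnormalize : (b ^ (-μ)) ^ 2 * b ^ (2 * μ) = 1 := by
    rw [← Real.rpow_natCast, ← Real.rpow_mul hb0.le, ← Real.rpow_add hb0, Nat.cast_ofNat,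
      show -μ * 2 + 2 * μ = 0 by ring, Real.rpow_zero]
  have hamplitude : ∀ {s e : ℝ}, e ≤ s - μ → |b ^ (-μ) * b ^ s| ≤ b ^ e := fun he => by
    rw [abs_of_pos (by positivity), ← Real.rpow_add hb0, neg_add_eq_sub]
    exact Real.rpow_le_rpow_of_exponent_ge hb0 hb1 he
  have hsub := bumpyD_mono ε ψ hb1
  have hsol' := (hsol.mono hsub).comp_smul hb0.ne' (b ^ (-μ))
  rw [osc_comp_smul, hD] at hsol'
  have hbc' := (hbc.mono hsub (bumpyB_mono ε ψ hb1)).comp_smul b (b ^ (-μ))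
  rw [hD, hB] at hbc'
  have havg' : (⨍ x in bumpyD n (b⁻¹ * ε) ψ 1, ‖b ^ (-μ) • u (b • x)‖ ^ 2) ≤ 1 := by
    rw [← hD, setAverage_norm_smul_comp_smul_sq volume hb0.ne', ← hnormalize]
    exact mul_le_mul_of_nonneg_left havg (by positivity)
  have hf' := (eLpNorm_smul_comp_smul_le volume hb0 hp (a := b ^ (-μ) * b ^ 2)
    (by simpa [finrank_pt] using hamplitude (s := 2) hμp) _ f).trans
    ((eLpNorm_mono_measure f (Measure.restrict_mono hsub le_rfl)).trans hf)
  have hF' := (eLpNorm_smul_comp_smul_le volume hb0 hq (a := b ^ (-μ) * b)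
    (by simpa [finrank_pt] using hamplitude (s := 1) hμq) _ F).trans
    ((eLpNorm_mono_measure F (Measure.restrict_mono hsub le_rfl)).trans hF)
  rw [hD] at hf' hF'
  have himproved := himp _ _ _ hsol' hbc' havg' hf' hF'
  rw [← hDθ, setAverage_norm_smul_comp_smul_sq volume hb0.ne'] at himproved
  rw [Real.mul_rpow hb0.le hθ]
  calc (⨍ x in bumpyD n ε ψ (b * θ), ‖u x‖ ^ 2)
      = b ^ (2 * μ) * ((b ^ (-μ)) ^ 2 * ⨍ x in bumpyD n ε ψ (b * θ), ‖u x‖ ^ 2) := by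
        rw [← mul_assoc, mul_comm (b ^ (2 * μ)), hnormalize, one_mul]
    _ ≤ b ^ (2 * μ) * θ ^ (2 * μ) := by gcongr

theorem holder_iteration_general
    (n N : ℕ)
    (lam ν₀ M₀ : ℝ)
    (ω : ℝ → ℝ) (κ κ' : ℝ) (hκ : 0 < κ) (hκ' : 0 < κ')
    (μ : ℝ)
    (hμ : μ < min (1 - (n + 1 : ℝ) / ((n + 1 : ℝ) + κ))
        (2 - (n + 1 : ℝ) / ((n + 1 : ℝ) / 2 + κ')))
    (ε₀ θ : ℝ) (hε₀ : 0 < ε₀) (hθ0 : 0 < θ) (hθ : θ < 1 / 8)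
    -- `ε₀` and `θ` are given by the improvement lemma:
    (himp : ∀ ψ : (Fin n → ℝ) → ℝ, MemC1Mod M₀ ω ψ →
      ∀ ε : ℝ, 0 < ε → ε < ε₀ →
      ∀ A : Coeff n N, MemA lam ν₀ M₀ A →
      ∀ f : Pt n → Fin N → ℝ, ∀ F : Pt n → Fin (n + 1) → Fin N → ℝ,
      ∀ u : Pt n → Fin N → ℝ,
        WeakSol (osc ε A) (bumpyD n ε ψ 1) f F u →
        ZeroBC (bumpyD n ε ψ 1) (bumpyB n ε ψ 1) u →
        (⨍ x in bumpyD n ε ψ 1, ‖u x‖ ^ 2) ≤ 1 →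
        eLpNorm f (ENNReal.ofReal ((n + 1 : ℝ) / 2 + κ'))
            (volume.restrict (bumpyD n ε ψ 1)) ≤ ENNReal.ofReal ε₀ →
        eLpNorm F (ENNReal.ofReal ((n + 1 : ℝ) + κ))
            (volume.restrict (bumpyD n ε ψ 1)) ≤ ENNReal.ofReal ε₀ →
        (⨍ x in bumpyD n ε ψ θ, ‖u x‖ ^ 2) ≤ θ ^ (2 * μ)) :
    ∀ k : ℕ, 1 ≤ k →
      ∀ ε : ℝ, 0 < ε → ε < θ ^ (k - 1) * ε₀ →
      ∀ ψ : (Fin n → ℝ) → ℝ, MemC1Mod M₀ ω ψ →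
      ∀ A : Coeff n N, MemA lam ν₀ M₀ A →
      ∀ f : Pt n → Fin N → ℝ, ∀ F : Pt n → Fin (n + 1) → Fin N → ℝ,
      ∀ u : Pt n → Fin N → ℝ,
        WeakSol (osc ε A) (bumpyD n ε ψ 1) f F u →
        ZeroBC (bumpyD n ε ψ 1) (bumpyB n ε ψ 1) u →
        (⨍ x in bumpyD n ε ψ 1, ‖u x‖ ^ 2) ≤ 1 →
        eLpNorm f (ENNReal.ofReal ((n + 1 : ℝ) / 2 + κ'))
            (volume.restrict (bumpyD n ε ψ 1)) ≤ ENNReal.ofReal ε₀ →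
        eLpNorm F (ENNReal.ofReal ((n + 1 : ℝ) + κ))
            (volume.restrict (bumpyD n ε ψ 1)) ≤ ENNReal.ofReal ε₀ →
        (⨍ x in bumpyD n ε ψ (θ ^ k), ‖u x‖ ^ 2) ≤ θ ^ (2 * (k : ℝ) * μ) := by
  have hθ1 : θ ≤ 1 := by linarith
  have hμq : (n + 1 : ℝ) / ((n + 1 : ℝ) + κ) ≤ 1 - μ := by
    linarith [min_le_left _ _ |>.trans_lt' hμ]
  have hμp : (n + 1 : ℝ) / ((n + 1 : ℝ) / 2 + κ') ≤ 2 - μ := by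
    linarith [min_le_right _ _ |>.trans_lt' hμ]
  have hpow : ∀ k : ℕ, θ ^ (2 * (k : ℝ) * μ) = (θ ^ k) ^ (2 * μ) := fun k => by
    rw [← Real.rpow_natCast, ← Real.rpow_mul hθ0.le]
    ring_nf
  intro k hk
  induction k, hk using Nat.le_induction with
  | base =>
    intro ε hε hεθ ψ hψ A hA f F u hsol hbc havg hf hF
    simpa using himp ψ hψ ε hε (by simpa using hεθ) A hA f F u hsol hbc havg hf hF
  | succ k hk ih =>
    intro ε hε hεθ ψ hψ A hA f F u hsol hbc havg hf hF
    rw [Nat.add_sub_cancel] at hεθ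
    have hθk : 0 < θ ^ k := pow_pos hθ0 k
    have hεprev : ε < θ ^ (k - 1) * ε₀ := hεθ.trans_le <|
      mul_le_mul_of_nonneg_right (pow_le_pow_of_le_one hθ0.le hθ1 (Nat.sub_le k 1)) hε₀.le
    have hprev := ih ε hε hεprev ψ hψ A hA f F u hsol hbc havg hf hF
    rw [hpow] at hprev ⊢
    rw [pow_succ]
    exact setAverage_bumpyD_le_of_improvement hθk (pow_le_one₀ hθ0.le hθ1) hθ0.le
      (by positivity) (by positivity) hμp hμq
      (himp ψ hψ _ (by positivity) ((inv_mul_lt_iff₀ hθk).2 hεθ) A hA) hsol hbc hprev hf hF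

/-- Lemma 3.5: iteration lemma for the boundary Hölder estimate,
where `ε₀` and `θ` are constants for which the improvement lemma holds. -/
theorem holder_iteration
    (n N : ℕ) (hn : 1 ≤ n) (hN : 1 ≤ N)
    (lam ν₀ M₀ : ℝ) (hlam : lam ∈ Set.Ioo (0 : ℝ) 1)
    (hν₀ : ν₀ ∈ Set.Ioo (0 : ℝ) 1) (hM₀ : 0 < M₀)
    (ω : ℝ → ℝ) (hω : IsModulus ω) (κ κ' : ℝ) (hκ : 0 < κ) (hκ' : 0 < κ')
    (μ : ℝ) (hμ0 : 0 < μ)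
    (hμ : μ < min (1 - (n + 1 : ℝ) / ((n + 1 : ℝ) + κ))
        (2 - (n + 1 : ℝ) / ((n + 1 : ℝ) / 2 + κ')))
    (ε₀ θ : ℝ) (hε₀ : 0 < ε₀) (hθ0 : 0 < θ) (hθ : θ < 1 / 8)
    -- `ε₀` and `θ` are given by the improvement lemma:
    (himp : ∀ ψ : (Fin n → ℝ) → ℝ, MemC1Mod M₀ ω ψ →
      ∀ ε : ℝ, 0 < ε → ε < ε₀ →
      ∀ A : Coeff n N, MemA lam ν₀ M₀ A →
      ∀ f : Pt n → Fin N → ℝ, ∀ F : Pt n → Fin (n + 1) → Fin N → ℝ,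
      ∀ u : Pt n → Fin N → ℝ,
        WeakSol (osc ε A) (bumpyD n ε ψ 1) f F u →
        ZeroBC (bumpyD n ε ψ 1) (bumpyB n ε ψ 1) u →
        (⨍ x in bumpyD n ε ψ 1, ‖u x‖ ^ 2) ≤ 1 →
        eLpNorm f (ENNReal.ofReal ((n + 1 : ℝ) / 2 + κ'))
            (volume.restrict (bumpyD n ε ψ 1)) ≤ ENNReal.ofReal ε₀ →
        eLpNorm F (ENNReal.ofReal ((n + 1 : ℝ) + κ))
            (volume.restrict (bumpyD n ε ψ 1)) ≤ ENNReal.ofReal ε₀ →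
        (⨍ x in bumpyD n ε ψ θ, ‖u x‖ ^ 2) ≤ θ ^ (2 * μ)) :
    ∀ k : ℕ, 1 ≤ k →
      ∀ ε : ℝ, 0 < ε → ε < θ ^ (k - 1) * ε₀ →
      ∀ ψ : (Fin n → ℝ) → ℝ, MemC1Mod M₀ ω ψ →
      ∀ A : Coeff n N, MemA lam ν₀ M₀ A →
      ∀ f : Pt n → Fin N → ℝ, ∀ F : Pt n → Fin (n + 1) → Fin N → ℝ,
      ∀ u : Pt n → Fin N → ℝ,
        WeakSol (osc ε A) (bumpyD n ε ψ 1) f F u →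
        ZeroBC (bumpyD n ε ψ 1) (bumpyB n ε ψ 1) u →
        (⨍ x in bumpyD n ε ψ 1, ‖u x‖ ^ 2) ≤ 1 →
        eLpNorm f (ENNReal.ofReal ((n + 1 : ℝ) / 2 + κ'))
            (volume.restrict (bumpyD n ε ψ 1)) ≤ ENNReal.ofReal ε₀ →
        eLpNorm F (ENNReal.ofReal ((n + 1 : ℝ) + κ))
            (volume.restrict (bumpyD n ε ψ 1)) ≤ ENNReal.ofReal ε₀ →
        (⨍ x in bumpyD n ε ψ (θ ^ k), ‖u x‖ ^ 2) ≤ θ ^ (2 * (k : ℝ) * μ) :=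
  holder_iteration_general n N lam ν₀ M₀ ω κ κ' hκ hκ' μ hμ ε₀ θ hε₀ hθ0 hθ himp

end Bumpy
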